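/- arXiv:1711.08986 — 4 statements merged into one kernel-verified Lean document; each statement's English description precedes it below -/
import Mathlib

section
/- If x and y are two distinct points of [0,1] that are not one-sided minima of a continuous excursion g, then x and y are g-comparable, i.e. the minimum of g on the interval between x and y is attained at a unique point, which is a strict local minimum lying strictly between x and y. -/
open MeasureTheory Set

noncomputable section

/-- `x` is not a one-sided minimum of `g`. -/
def NotOneSidedMin (g : ℝ → ℝ) (x : ℝ) : Prop :=
  x ∈ Set.Ioo (0:ℝ) 1 ∧ ∀ ε > 0, (∃ x₁ ∈ Set.Ioo (x-ε) x, g x₁ < g x) ∧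
    (∃ x₂ ∈ Set.Ioo x (x+ε), g x₂ < g x)

/-- `b` is an inner local minimum of `g`. -/
def IsInnerLocalMin (g : ℝ → ℝ) (b : ℝ) : Prop :=
  b ∈ Set.Ioo (0:ℝ) 1 ∧ ∃ ε > 0, ∀ x ∈ Set.Ioo (b-ε) (b+ε), g b ≤ g x

/-- `b` is a strict (inner) local minimum of `g`. -/
def IsStrictLocalMin (g : ℝ → ℝ) (b : ℝ) : Prop :=
  b ∈ Set.Ioo (0:ℝ) 1 ∧ ∃ ε > 0, ∀ x ∈ Set.Ioo (b-ε) (b+ε), x ≠ b → g b < g x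

/-- A CRT excursion. -/
structure IsCRT (g : ℝ → ℝ) : Prop where
  cont : ContinuousOn g (Set.Icc 0 1)
  nonneg : ∀ t ∈ Set.Icc (0:ℝ) 1, 0 ≤ g t
  pos : ∀ t ∈ Set.Ioo (0:ℝ) 1, 0 < g t
  zero0 : g 0 = 0
  zero1 : g 1 = 0
  dense_min : ∀ x ∈ Set.Icc (0:ℝ) 1, x ∈ closure {b | IsInnerLocalMin g b}
  distinct : ∀ b b', IsInnerLocalMin g b → IsInnerLocalMin g b' → g b = g b' → b = b'
  leaves_full : volume {x | NotOneSidedMin g x} = 1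

/-- `β` is the unique minimum point of `g` on `[x,y]`, lies in `(x,y)`,
and is a strict local minimum: the most recent common ancestor of `x < y`. -/
def IsMrca (g : ℝ → ℝ) (β x y : ℝ) : Prop :=
  x < y ∧ β ∈ Set.Ioo x y ∧ IsStrictLocalMin g β ∧
    (∀ t ∈ Set.Icc x y, g β ≤ g t) ∧ (∀ t ∈ Set.Icc x y, g t = g β → t = β)

/-- `x` and `y` are `g`-comparable. -/
def GComparable (g : ℝ → ℝ) (x y : ℝ) : Prop :=
  ∃ β, IsMrca g β (min x y) (max x y)

/-- `b` enumerates (injectively) the strict local minima of `g`. -/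
def IsEnum (g : ℝ → ℝ) (b : ℕ → ℝ) : Prop :=
  Function.Injective b ∧ ∀ β, IsStrictLocalMin g β ↔ ∃ i, b i = β

/-- The sign-shuffled comparison relation `u ⊲ v` : if the mrca of `u,v` carries
sign `⊕` (`true`) then the smaller goes first, otherwise the bigger goes first. -/
def Tri (g : ℝ → ℝ) (b : ℕ → ℝ) (s : ℕ → Bool) (u v : ℝ) : Prop :=
  ∃ i, (IsMrca g (b i) u v ∧ s i = true) ∨ (IsMrca g (b i) v u ∧ s i = false)

/-- The measure-preserving function `φ_{g,s}`. -/
def phi (g : ℝ → ℝ) (b : ℕ → ℝ) (s : ℕ → Bool) (t : ℝ) : ℝ :=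
  (volume {u ∈ Set.Icc (0:ℝ) 1 | Tri g b s u t}).toReal

def aPt (g : ℝ → ℝ) (β : ℝ) : ℝ := sSup {t | t < β ∧ g t = g β}
def cPt (g : ℝ → ℝ) (β : ℝ) : ℝ := sInf {t | β < t ∧ g t = g β}

def aI (g : ℝ → ℝ) (b : ℕ → ℝ) (i : ℕ) : ℝ := aPt g (b i)
def cI (g : ℝ → ℝ) (b : ℕ → ℝ) (i : ℕ) : ℝ := cPt g (b i)
def aI' (g : ℝ → ℝ) (b : ℕ → ℝ) (s : ℕ → Bool) (i : ℕ) : ℝ := phi g b s (aI g b i)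
def cI' (g : ℝ → ℝ) (b : ℕ → ℝ) (s : ℕ → Bool) (i : ℕ) : ℝ :=
  aI' g b s i + (cI g b i - aI g b i)
def bI' (g : ℝ → ℝ) (b : ℕ → ℝ) (s : ℕ → Bool) (i : ℕ) : ℝ :=
  aI' g b s i + (if s i then b i - aI g b i else cI g b i - b i)

/-- The permuton `μ_{g,s} = (Id, φ_{g,s})_* Leb`. -/
def permuton (g : ℝ → ℝ) (b : ℕ → ℝ) (s : ℕ → Bool) : Measure (ℝ × ℝ) :=
  Measure.map (fun t => (t, phi g b s t)) (volume.restrict (Set.Icc 0 1))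

/-- Property (A) of a signed excursion. -/
def PropA (g : ℝ → ℝ) (b : ℕ → ℝ) (s : ℕ → Bool) : Prop :=
  ∀ i j, i ≠ j →
    Set.Icc (aI' g b s j) (cI' g b s j) ⊆ Set.Icc (aI' g b s i) (cI' g b s i) →
    (∀ y ∈ Set.Icc (g (b i)) (g (b j)),
      y ∈ closure {h | ∃ l, h = g (b l) ∧
        Set.Icc (aI' g b s l) (cI' g b s l) ⊆ Set.Icc (aI' g b s i) (cI' g b s i) ∧
        Set.Icc (aI' g b s j) (cI' g b s j) ⊆ Set.Icc (bI' g b s l) (cI' g b s l)}) ∧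
    (∀ y ∈ Set.Icc (g (b i)) (g (b j)),
      y ∈ closure {h | ∃ l, h = g (b l) ∧
        Set.Icc (aI' g b s l) (cI' g b s l) ⊆ Set.Icc (aI' g b s i) (cI' g b s i) ∧
        Set.Icc (aI' g b s j) (cI' g b s j) ⊆ Set.Icc (aI' g b s l) (bI' g b s l)})

/-- The shuffled excursion `f_{g,s}`. -/
def fShuffle (g : ℝ → ℝ) (b : ℕ → ℝ) (s : ℕ → Bool) (t : ℝ) : ℝ :=
  ⨆ i, Set.indicator (Set.Icc (aI' g b s i) (cI' g b s i)) (fun _ => g (b i)) t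

/-- Topological support of a measure. -/
def mSupport {α : Type*} [TopologicalSpace α] [MeasurableSpace α] (μ : Measure α) : Set α :=
  {x | ∀ U : Set α, IsOpen U → x ∈ U → μ U ≠ 0}

/-- Two distinct leaves (non-one-sided-minima) of a CRT excursion are `g`-comparable. -/
theorem stmt0 (g : ℝ → ℝ) (hg : IsCRT g) (x y : ℝ)
    (hx : NotOneSidedMin g x) (hy : NotOneSidedMin g y) (hxy : x ≠ y) :
    GComparable g x y := by
  set p := min x y with hp_def
  set q := max x y with hq_def
  have hpq : p < q := min_lt_max.mpr hxy
  have hp : NotOneSidedMin g p := by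
    rcases min_choice x y with h | h <;> rw [hp_def, h] <;> assumption
  have hq : NotOneSidedMin g q := by
    rcases max_choice x y with h | h <;> rw [hq_def, h] <;> assumption
  obtain ⟨hp01, hpcond⟩ := hp
  obtain ⟨hq01, hqcond⟩ := hq
  have hsub : Set.Icc p q ⊆ Set.Icc (0:ℝ) 1 := Set.Icc_subset_Icc hp01.1.le hq01.2.le
  have hcont : ContinuousOn g (Set.Icc p q) := hg.cont.mono hsub
  obtain ⟨β, hβmem, hβmin⟩ :=
    isCompact_Icc.exists_isMinOn (Set.nonempty_Icc.mpr hpq.le) hcont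
  have hle : ∀ t ∈ Set.Icc p q, g β ≤ g t := fun t ht => hβmin ht
  obtain ⟨_, x₂, hx₂, hgx₂⟩ := hpcond (q - p) (by linarith)
  obtain ⟨⟨x₁, hx₁, hgx₁⟩, _⟩ := hqcond (q - p) (by linarith)
  have hβp : g β < g p :=
    lt_of_le_of_lt (hle x₂ ⟨hx₂.1.le, by linarith [hx₂.2]⟩) hgx₂
  have hβq : g β < g q :=
    lt_of_le_of_lt (hle x₁ ⟨by linarith [hx₁.1], hx₁.2.le⟩) hgx₁
  -- every minimizer lies in the open interval and is an inner local min
  have hmin : ∀ t ∈ Set.Icc p q, g t = g β → t ∈ Set.Ioo p q ∧ IsInnerLocalMin g t := by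
    intro t ht he
    have htp : p < t := lt_of_le_of_ne ht.1 (by rintro rfl; exact absurd he (by linarith))
    have htq : t < q := lt_of_le_of_ne ht.2 (by rintro rfl; exact absurd he (by linarith))
    refine ⟨⟨htp, htq⟩, ⟨⟨lt_trans hp01.1 htp, lt_trans htq hq01.2⟩, min (t - p) (q - t),
      lt_min (by linarith) (by linarith), ?_⟩⟩
    intro u hu
    have h1 : p ≤ u := by
      have := hu.1; have := min_le_left (t - p) (q - t); linarith
    have h2 : u ≤ q := by
      have := hu.2; have := min_le_right (t - p) (q - t); linarith
    rw [he]; exact hle u ⟨h1, h2⟩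
  have hβIoo : β ∈ Set.Ioo p q := (hmin β hβmem rfl).1
  have huniq : ∀ t ∈ Set.Icc p q, g t = g β → t = β := fun t ht he =>
    hg.distinct t β (hmin t ht he).2 (hmin β hβmem rfl).2 he
  refine ⟨β, hpq, hβIoo, ⟨⟨lt_trans hp01.1 hβIoo.1, lt_trans hβIoo.2 hq01.2⟩,
    min (β - p) (q - β), lt_min (by linarith [hβIoo.1]) (by linarith [hβIoo.2]), ?_⟩,
    hle, huniq⟩
  intro u hu hne
  have h1 : p ≤ u := by
    have := hu.1; have := min_le_left (β - p) (q - β); linarith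
  have h2 : u ≤ q := by
    have := hu.2; have := min_le_right (β - p) (q - β); linarith
  rcases lt_or_eq_of_le (hle u ⟨h1, h2⟩) with h | h
  · exact h
  · exact absurd (huniq u ⟨h1, h2⟩ h.symm) hne

end
end

section
/- For a CRT excursion g, the intervals [a_i, c_i] associated to its strict local minima are nested or disjoint: for all i, j, either [a_i,c_i] ⊆ [a_j,c_j], or [a_j,c_j] ⊆ [a_i,c_i], or [a_i,c_i] ∩ [a_j,c_j] = ∅. Moreover, if [a_j,c_j] ⊆ [a_i,c_i] with j ≠ i, then either [a_j,c_j] ⊆ (a_i,b_i) or [a_j,c_j] ⊆ (b_i,c_i). -/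
open MeasureTheory Set

noncomputable section

lemma strict_inner {g : ℝ → ℝ} {β : ℝ} (h : IsStrictLocalMin g β) : IsInnerLocalMin g β := by
  obtain ⟨h1, ε, hε, h2⟩ := h
  refine ⟨h1, ε, hε, fun x hx => ?_⟩
  by_cases hxb : x = β
  · rw [hxb]
  · exact (h2 x hx hxb).le

lemma key_struct {g : ℝ → ℝ} (hg : IsCRT g) {β : ℝ} (hβ : IsStrictLocalMin g β) :
    aPt g β < β ∧ β < cPt g β ∧ g (aPt g β) = g β ∧ g (cPt g β) = g β ∧
      (∀ t ∈ Set.Icc (aPt g β) (cPt g β), g β ≤ g t) := by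
  obtain ⟨hβ01, ε, hε, hmin⟩ := hβ
  obtain ⟨hβ0, hβ1⟩ := hβ01
  set m := g β with hm_def
  have hm : 0 < m := hg.pos β ⟨hβ0, hβ1⟩
  set δ := min ε (min β (1 - β)) / 2 with hδdef
  have hδ : 0 < δ := by
    have h1 : 0 < min ε (min β (1 - β)) := lt_min hε (lt_min hβ0 (by linarith))
    linarith
  have hδε : δ < ε := by
    have := min_le_left ε (min β (1 - β)); linarith
  have hδβ : δ < β := by
    have h1 := min_le_right ε (min β (1 - β)); have h2 := min_le_left β (1 - β); linarith
  have hδ1 : β + δ < 1 := by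
    have h1 := min_le_right ε (min β (1 - β)); have h2 := min_le_right β (1 - β); linarith
  have hgl : m < g (β - δ) := hmin (β - δ) ⟨by linarith, by linarith⟩ (by linarith)
  have hgr : m < g (β + δ) := hmin (β + δ) ⟨by linarith, by linarith⟩ (by linarith)
  -- left point t₀
  have hconta : ContinuousOn g (Set.Icc 0 (β - δ)) :=
    hg.cont.mono (Set.Icc_subset_Icc le_rfl (by linarith))
  obtain ⟨t₀, ht₀mem, hgt₀⟩ := intermediate_value_Icc (by linarith : (0:ℝ) ≤ β - δ) hconta
    ⟨by rw [hg.zero0]; exact hm.le, hgl.le⟩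
  have ht₀β : t₀ < β := lt_of_le_of_lt ht₀mem.2 (by linarith)
  have ht₀0 : 0 < t₀ := by
    rcases ht₀mem.1.lt_or_eq with h | h
    · exact h
    · exfalso; rw [← h, hg.zero0] at hgt₀; linarith
  set Sa := {t : ℝ | t < β ∧ g t = m} with hSa_def
  have ht₀Sa : t₀ ∈ Sa := ⟨ht₀β, hgt₀⟩
  have hSa_ub : ∀ t ∈ Sa, t ≤ β - δ := by
    rintro t ⟨htβ, hgt⟩
    by_contra h
    push_neg at h
    have := hmin t ⟨by linarith, by linarith⟩ (by linarith)
    rw [hgt] at this; exact lt_irrefl m this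
  have hSa_bdd : BddAbove Sa := ⟨β - δ, fun t ht => hSa_ub t ht⟩
  set a := sSup Sa with ha_def
  have ha_ub : a ≤ β - δ := csSup_le ⟨t₀, ht₀Sa⟩ hSa_ub
  have ht₀a : t₀ ≤ a := le_csSup hSa_bdd ht₀Sa
  set Sa' := Sa ∩ Set.Icc 0 1 with hSa'_def
  have ht₀Sa' : t₀ ∈ Sa' := ⟨ht₀Sa, ht₀0.le, by linarith [ht₀mem.2]⟩
  have hSa'_bdd : BddAbove Sa' := ⟨β - δ, fun t ht => hSa_ub t ht.1⟩
  have haeq : a = sSup Sa' := by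
    apply le_antisymm
    · apply csSup_le ⟨t₀, ht₀Sa⟩
      intro t ht
      rcases le_total t 0 with h | h
      · exact le_trans h (le_trans ht₀0.le (le_csSup hSa'_bdd ht₀Sa'))
      · exact le_csSup hSa'_bdd ⟨ht, h, le_trans (hSa_ub t ht) (by linarith)⟩
    · exact csSup_le_csSup hSa_bdd ⟨t₀, ht₀Sa'⟩ Set.inter_subset_left
  have hacl : a ∈ closure Sa' := haeq ▸ csSup_mem_closure ⟨t₀, ht₀Sa'⟩ hSa'_bdd
  have hK : IsClosed (Set.Icc (0:ℝ) 1 ∩ g ⁻¹' {m}) :=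
    hg.cont.preimage_isClosed_of_isClosed isClosed_Icc isClosed_singleton
  have hsubKa : Sa' ⊆ Set.Icc (0:ℝ) 1 ∩ g ⁻¹' {m} := fun t ht => ⟨ht.2, ht.1.2⟩
  have haK : a ∈ Set.Icc (0:ℝ) 1 ∩ g ⁻¹' {m} := closure_minimal hsubKa hK hacl
  have hga : g a = m := haK.2
  have ha0 : 0 ≤ a := haK.1.1
  have haβ : a < β := by linarith
  -- right point t₁
  have hcontc : ContinuousOn g (Set.Icc (β + δ) 1) :=
    hg.cont.mono (Set.Icc_subset_Icc (by linarith) le_rfl)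
  obtain ⟨t₁, ht₁mem, hgt₁⟩ := intermediate_value_Icc' (by linarith : β + δ ≤ 1) hcontc
    ⟨by rw [hg.zero1]; exact hm.le, hgr.le⟩
  have ht₁β : β < t₁ := by linarith [ht₁mem.1]
  have ht₁1 : t₁ < 1 := by
    rcases ht₁mem.2.lt_or_eq with h | h
    · exact h
    · exfalso; rw [h, hg.zero1] at hgt₁; linarith
  set Sc := {t : ℝ | β < t ∧ g t = m} with hSc_def
  have ht₁Sc : t₁ ∈ Sc := ⟨ht₁β, hgt₁⟩
  have hSc_lb : ∀ t ∈ Sc, β + δ ≤ t := by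
    rintro t ⟨htβ, hgt⟩
    by_contra h
    push_neg at h
    have := hmin t ⟨by linarith, by linarith⟩ (by linarith)
    rw [hgt] at this; exact lt_irrefl m this
  have hSc_bdd : BddBelow Sc := ⟨β + δ, fun t ht => hSc_lb t ht⟩
  set c := sInf Sc with hc_def
  have hc_lb : β + δ ≤ c := le_csInf ⟨t₁, ht₁Sc⟩ hSc_lb
  have hct₁ : c ≤ t₁ := csInf_le hSc_bdd ht₁Sc
  set Sc' := Sc ∩ Set.Icc 0 1 with hSc'_def
  have ht₁Sc' : t₁ ∈ Sc' := ⟨ht₁Sc, by linarith, ht₁mem.2⟩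
  have hSc'_bdd : BddBelow Sc' := ⟨β + δ, fun t ht => hSc_lb t ht.1⟩
  have hceq : c = sInf Sc' := by
    apply le_antisymm
    · exact csInf_le_csInf hSc_bdd ⟨t₁, ht₁Sc'⟩ Set.inter_subset_left
    · apply le_csInf ⟨t₁, ht₁Sc⟩
      intro t ht
      rcases le_total t 1 with h | h
      · exact csInf_le hSc'_bdd ⟨ht, by linarith [hSc_lb t ht], h⟩
      · exact le_trans (le_trans (csInf_le hSc'_bdd ht₁Sc') ht₁mem.2) h
  have hccl : c ∈ closure Sc' := hceq ▸ csInf_mem_closure ⟨t₁, ht₁Sc'⟩ hSc'_bdd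
  have hsubKc : Sc' ⊆ Set.Icc (0:ℝ) 1 ∩ g ⁻¹' {m} := fun t ht => ⟨ht.2, ht.1.2⟩
  have hcK : c ∈ Set.Icc (0:ℝ) 1 ∩ g ⁻¹' {m} := closure_minimal hsubKc hK hccl
  have hgc : g c = m := hcK.2
  have hc1 : c ≤ 1 := hcK.1.2
  have hβc : β < c := by linarith
  have h5 : ∀ t ∈ Set.Icc a c, m ≤ g t := by
    rintro t ⟨hta, htc⟩
    rcases lt_trichotomy t β with htβ | htβ | htβ
    · rcases eq_or_lt_of_le hta with h | h
      · rw [← h, hga]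
      · by_contra hcon
        push_neg at hcon
        set s := (max t (β - δ) + β) / 2 with hs_def
        have hM : max t (β - δ) < β := max_lt htβ (by linarith)
        have hMl := le_max_left t (β - δ)
        have hMr := le_max_right t (β - δ)
        have hts : t < s := by linarith
        have hsβ : s < β := by linarith
        have hsδ : β - δ < s := by linarith
        have hgs : m < g s := hmin s ⟨by linarith, by linarith⟩ (by linarith)
        have hsub2 : Set.Icc t s ⊆ Set.Icc (0:ℝ) 1 :=
          Set.Icc_subset_Icc (by linarith) (by linarith)
        obtain ⟨u, humem, hgu⟩ := intermediate_value_Icc hts.le (hg.cont.mono hsub2)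
          ⟨hcon.le, hgs.le⟩
        have huSa : u ∈ Sa := ⟨by linarith [humem.2], hgu⟩
        have := le_csSup hSa_bdd huSa
        linarith [humem.1]
    · rw [htβ]
    · rcases eq_or_lt_of_le htc with h | h
      · rw [h, hgc]
      · by_contra hcon
        push_neg at hcon
        set s := (β + min t (β + δ)) / 2 with hs_def
        have hM : β < min t (β + δ) := lt_min htβ (by linarith)
        have hMl := min_le_left t (β + δ)
        have hMr := min_le_right t (β + δ)
        have hβs : β < s := by linarith
        have hst : s < t := by linarith
        have hsδ : s < β + δ := by linarith
        have hgs : m < g s := hmin s ⟨by linarith, by linarith⟩ (by linarith)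
        have hsub2 : Set.Icc s t ⊆ Set.Icc (0:ℝ) 1 :=
          Set.Icc_subset_Icc (by linarith) (by linarith)
        obtain ⟨u, humem, hgu⟩ := intermediate_value_Icc' hst.le (hg.cont.mono hsub2)
          ⟨hcon.le, hgs.le⟩
        have huSc : u ∈ Sc := ⟨by linarith [humem.1], hgu⟩
        have := csInf_le hSc_bdd huSc
        linarith [humem.2]
  exact ⟨haβ, hβc, hga, hgc, h5⟩

lemma vals_ne {g : ℝ → ℝ} (hg : IsCRT g) {b : ℕ → ℝ} (hb : IsEnum g b) {i j : ℕ}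
    (hij : i ≠ j) : g (b i) ≠ g (b j) := fun he =>
  hij (hb.1 (hg.distinct _ _ (strict_inner ((hb.2 _).mpr ⟨i, rfl⟩))
    (strict_inner ((hb.2 _).mpr ⟨j, rfl⟩)) he))

/-- Nesting structure of the intervals `[a_i, c_i]`. -/
theorem stmt1 (g : ℝ → ℝ) (hg : IsCRT g) (b : ℕ → ℝ) (hb : IsEnum g b) (i j : ℕ) :
    (Set.Icc (aI g b i) (cI g b i) ⊆ Set.Icc (aI g b j) (cI g b j) ∨
     Set.Icc (aI g b j) (cI g b j) ⊆ Set.Icc (aI g b i) (cI g b i) ∨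
     Set.Icc (aI g b i) (cI g b i) ∩ Set.Icc (aI g b j) (cI g b j) = ∅) ∧
    (j ≠ i → Set.Icc (aI g b j) (cI g b j) ⊆ Set.Icc (aI g b i) (cI g b i) →
      (Set.Icc (aI g b j) (cI g b j) ⊆ Set.Ioo (aI g b i) (b i) ∨
       Set.Icc (aI g b j) (cI g b j) ⊆ Set.Ioo (b i) (cI g b i))) := by
  have hi : IsStrictLocalMin g (b i) := (hb.2 (b i)).mpr ⟨i, rfl⟩
  have hj : IsStrictLocalMin g (b j) := (hb.2 (b j)).mpr ⟨j, rfl⟩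
  obtain ⟨hiaβ, hiβc, higa, higc, himin⟩ := key_struct hg hi
  obtain ⟨hjaβ, hjβc, hjga, hjgc, hjmin⟩ := key_struct hg hj
  constructor
  · by_cases hij : i = j
    · subst hij; exact Or.inl subset_rfl
    · rcases eq_or_ne (Set.Icc (aI g b i) (cI g b i) ∩ Set.Icc (aI g b j) (cI g b j)) ∅
        with hemp | hemp
      · exact Or.inr (Or.inr hemp)
      obtain ⟨x, hxi, hxj⟩ := Set.nonempty_iff_ne_empty.mpr hemp
      simp only [aI, cI] at hxi hxj ⊢
      have hne : g (b i) ≠ g (b j) := vals_ne hg hb hij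
      rcases le_total (aPt g (b i)) (aPt g (b j)) with hle | hle
      · refine Or.inr (Or.inl (Set.Icc_subset_Icc hle ?_))
        by_contra hcc; push_neg at hcc
        have hac : aPt g (b j) < cPt g (b i) := by
          have h1 : aPt g (b j) ≤ cPt g (b i) := le_trans hxj.1 hxi.2
          refine lt_of_le_of_ne h1 (fun h => hne ?_)
          rw [← higc, ← h, hjga]
        have h1 : g (b j) ≤ g (b i) := by
          have := hjmin (cPt g (b i)) ⟨hac.le, hcc.le⟩
          rwa [higc] at this
        have h2 : g (b i) ≤ g (b j) := by
          have := himin (aPt g (b j)) ⟨hle, hac.le⟩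
          rwa [hjga] at this
        exact hne (le_antisymm h2 h1)
      · refine Or.inl (Set.Icc_subset_Icc hle ?_)
        by_contra hcc; push_neg at hcc
        have hac : aPt g (b i) < cPt g (b j) := by
          have h1 : aPt g (b i) ≤ cPt g (b j) := le_trans hxi.1 hxj.2
          refine lt_of_le_of_ne h1 (fun h => hne ?_)
          rw [← higa, h, hjgc]
        have h1 : g (b i) ≤ g (b j) := by
          have := himin (cPt g (b j)) ⟨hac.le, hcc.le⟩
          rwa [hjgc] at this
        have h2 : g (b j) ≤ g (b i) := by
          have := hjmin (aPt g (b i)) ⟨hle, hac.le⟩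
          rwa [higa] at this
        exact hne (le_antisymm h1 h2)
  · intro hji hsub
    simp only [aI, cI] at hsub ⊢
    have hne : g (b j) ≠ g (b i) := vals_ne hg hb hji
    have ha := (hsub ⟨le_refl _, by linarith⟩).1
    have hc := (hsub ⟨(by linarith : aPt g (b j) ≤ cPt g (b j)), le_refl _⟩).2
    have haa : aPt g (b i) < aPt g (b j) :=
      lt_of_le_of_ne ha (fun h => hne (by rw [← hjga, ← h, higa]))
    have hcc : cPt g (b j) < cPt g (b i) :=
      lt_of_le_of_ne hc (fun h => hne (by rw [← hjgc, h, higc]))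
    by_cases h1 : cPt g (b j) < b i
    · exact Or.inl fun t ht => ⟨lt_of_lt_of_le haa ht.1, lt_of_le_of_lt ht.2 h1⟩
    by_cases h2 : b i < aPt g (b j)
    · exact Or.inr fun t ht => ⟨lt_of_lt_of_le h2 ht.1, lt_of_le_of_lt ht.2 hcc⟩
    push_neg at h1 h2
    exfalso
    have hA : g (b j) ≤ g (b i) := hjmin (b i) ⟨h2, h1⟩
    have hB : g (b i) ≤ g (b j) := himin (b j) ⟨by linarith, by linarith⟩
    exact hne (le_antisymm hA hB)


end
end

section
/- For every signed CRT excursion (g,s), the map φ_{g,s} : [0,1] → [0,1] defined by φ_{g,s}(t) = Leb{u ∈ [0,1] : u ⊲ t} preserves Lebesgue measure, i.e. the pushforward of Lebesgue measure on [0,1] under φ_{g,s} is Lebesgue measure. Consequently μ_{g,s} = (Id, φ_{g,s})_* Leb is a permuton (a measure on [0,1]² with uniform marginals). -/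
open MeasureTheory Set

noncomputable section

open scoped ENNReal

/-!
The relation `⊲` is a strict order which is total on the points that are not one-sided minima,
a set of full measure, and its graph is a countable union of rectangles `(a_i, b_i) × (b_i, c_i)`
(or their reflections), hence measurable. For any such order on a probability space `(α, μ)`
without atoms, the rank `F t = μ {u | u ⊲ t}` is uniformly distributed. Suppose `F ≤ c` on a set
`T` of points where `⊲` is total, and pick `t_n ∈ T` with `F t_n → sup_T F`. The initial segments
of the `t_n` form a chain whose union `E` has measure `sup_T F ≤ c`, and every `q ∈ T \ E` has
an initial segment containing `E` with the same measure, so `{p ∈ T \ E | p ⊲ q}` is null; by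
Fubini `(T \ E)²` is null. Hence `μ {F ≤ c} ≤ c`. The same bound for the reversed order, together
with `μ {u | u ⊲ t} + μ {v | t ⊲ v} = 1`, gives `μ {F ≤ c} = c`.
-/

theorem eq_volume_restrict_Icc_of_measure_Iic (ν : Measure ℝ) [IsProbabilityMeasure ν]
    (h : ∀ x ∈ Icc (0:ℝ) 1, ν (Iic x) = ENNReal.ofReal x) : ν = volume.restrict (Icc 0 1) := by
  refine Measure.ext_of_Iic ν _ fun a => ?_
  rw [Measure.restrict_apply measurableSet_Iic]
  rcases lt_or_ge a 0 with ha | ha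
  · have hempty : Iic a ∩ Icc 0 1 = ∅ :=
      eq_empty_of_forall_notMem fun t ht => (ha.trans_le ht.2.1).not_ge ht.1
    rw [hempty, measure_empty]
    refine measure_mono_null (Iic_subset_Iic.2 ha.le) ?_
    rw [h 0 (by simp), ENNReal.ofReal_zero]
  rcases le_or_gt a 1 with ha1 | ha1
  · have hIcc : Iic a ∩ Icc 0 1 = Icc 0 a := by
      ext t
      simp only [mem_inter_iff, mem_Iic, mem_Icc]
      constructor
      · rintro ⟨hta, ht0, -⟩; exact ⟨ht0, hta⟩
      · rintro ⟨ht0, hta⟩; exact ⟨hta, ht0, hta.trans ha1⟩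
    rw [h a ⟨ha, ha1⟩, hIcc, Real.volume_Icc, sub_zero]
  · have hIcc : Iic a ∩ Icc 0 1 = Icc 0 1 := inter_eq_right.2 fun t ht => ht.2.trans ha1.le
    rw [hIcc, Real.volume_Icc, sub_zero, ENNReal.ofReal_one]
    refine le_antisymm prob_le_one ?_
    rw [← ENNReal.ofReal_one, ← h 1 (by simp)]
    exact measure_mono (Iic_subset_Iic.2 ha1.le)

section RelRank

variable {α : Type*} [MeasurableSpace α] {μ : Measure α} {r : α → α → Prop}

def relRank (μ : Measure α) (r : α → α → Prop) (t : α) : ℝ := (μ {u | r u t}).toReal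

theorem measurable_relRank [SFinite μ] (hr : MeasurableSet {p : α × α | r p.1 p.2}) :
    Measurable (relRank μ r) :=
  (measurable_measure_prodMk_right hr).ennreal_toReal

theorem measure_eq_zero_of_forall_measure_setOf_rel_eq_zero [SFinite μ] [NullSingletonClass μ]
    (hr : MeasurableSet {p : α × α | r p.1 p.2}) {P : Set α} (hP : MeasurableSet P)
    (htot : ∀ p ∈ P, ∀ q ∈ P, p ≠ q → r p q ∨ r q p) (hnull : ∀ q ∈ P, μ {p ∈ P | r p q} = 0) :
    μ P = 0 := by
  set R : Set (α × α) := {x | r x.1 x.2}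
  have hR' : MeasurableSet (Prod.swap ⁻¹' R) := measurable_swap hr
  have hbelow : μ.prod μ (P ×ˢ P ∩ R) = 0 := by
    rw [Measure.prod_apply_symm ((hP.prod hP).inter hr)]
    refine lintegral_eq_zero_of_ae_eq_zero (.of_forall fun q => ?_)
    by_cases hq : q ∈ P
    · exact measure_mono_null (fun p hp => show p ∈ {p ∈ P | r p q} from ⟨hp.1.1, hp.2⟩)
        (hnull q hq)
    · exact measure_mono_null (fun p hp => hq hp.1.2) (measure_empty (μ := μ))
  have habove : μ.prod μ (P ×ˢ P ∩ Prod.swap ⁻¹' R) = 0 := by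
    rw [Measure.measure_prod_null ((hP.prod hP).inter hR')]
    refine .of_forall fun p => ?_
    by_cases hp : p ∈ P
    · exact measure_mono_null (fun q hq => show q ∈ {q ∈ P | r q p} from ⟨hq.1.2, hq.2⟩)
        (hnull p hp)
    · exact measure_mono_null (fun q hq => hp hq.1.1) (measure_empty (μ := μ))
  have hdiag : μ.prod μ (P ×ˢ P \ (R ∪ Prod.swap ⁻¹' R)) = 0 := by
    rw [Measure.measure_prod_null ((hP.prod hP).diff (hr.union hR'))]
    refine .of_forall fun p => measure_mono_null (fun q hq => ?_) (measure_singleton p)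
    by_contra hqp
    obtain ⟨⟨hp, hq⟩, hnr⟩ := hq
    rcases htot p hp q hq (Ne.symm hqp) with h | h
    exacts [hnr (Or.inl h), hnr (Or.inr h)]
  have := measure_union_null (measure_union_null hbelow habove) hdiag
  rwa [← inter_union_distrib_left, inter_union_sdiff, Measure.prod_prod, mul_self_eq_zero] at this

theorem measure_le_of_forall_measure_setOf_rel_le [IsFiniteMeasure μ] [NullSingletonClass μ]
    [IsTrans α r] (hr : MeasurableSet {p : α × α | r p.1 p.2}) {T : Set α} (hT : MeasurableSet T)
    (htot : ∀ p ∈ T, ∀ q ∈ T, p ≠ q → r p q ∨ r q p) {c : ℝ≥0∞}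
    (hc : ∀ t ∈ T, μ {u | r u t} ≤ c) : μ T ≤ c := by
  rcases T.eq_empty_or_nonempty with rfl | hTne
  · simp
  have hmeas (t : α) : MeasurableSet {u | r u t} := measurable_prodMk_right hr
  have hmono {p q : α} (h : r p q) : {u | r u p} ⊆ {u | r u q} := fun _ hu => _root_.trans hu h
  obtain ⟨v, -, hlim, hvT⟩ :=
    exists_seq_tendsto_sSup (hTne.image fun t => μ {u | r u t}) (OrderTop.bddAbove _)
  choose t htT hvt using hvT
  set σ := sSup ((fun t => μ {u | r u t}) '' T)
  set L : ℕ → Set α := fun n => {u | r u (t n)}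
  have hdir : Directed (· ⊆ ·) L := by
    intro m n
    rcases eq_or_ne (t m) (t n) with h | h
    · exact ⟨n, (congrArg (fun x => {u | r u x}) h).le, subset_rfl⟩
    rcases htot _ (htT m) _ (htT n) h with h | h
    exacts [⟨n, hmono h, subset_rfl⟩, ⟨m, subset_rfl, hmono h⟩]
  have hE_le : μ (⋃ n, L n) ≤ c := by
    rw [hdir.measure_iUnion]
    exact iSup_le fun n => hc _ (htT n)
  have hσ_le : σ ≤ μ (⋃ n, L n) :=
    le_of_tendsto' hlim fun n => hvt n ▸ measure_mono (subset_iUnion L n)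
  have hE_sub {q : α} (hq : q ∈ T \ ⋃ n, L n) : ⋃ n, L n ⊆ {u | r u q} := by
    refine iUnion_subset fun n => ?_
    rcases eq_or_ne (t n) q with h | h
    · rw [← h]
    rcases htot _ (htT n) _ hq.1 h with h | h
    exacts [hmono h, absurd (mem_iUnion_of_mem n h) hq.2]
  have hrest : μ (T \ ⋃ n, L n) = 0 := by
    refine measure_eq_zero_of_forall_measure_setOf_rel_eq_zero hr
      (hT.diff (.iUnion fun n => hmeas _)) (fun p hp q hq => htot p hp.1 q hq.1) fun q hq => ?_
    refine measure_mono_null (t := {u | r u q} \ ⋃ n, L n) (fun p hp => ⟨hp.2, hp.1.2⟩) ?_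
    rw [measure_sdiff (hE_sub hq) (MeasurableSet.iUnion fun n => hmeas _).nullMeasurableSet
      (measure_ne_top _ _)]
    exact tsub_eq_zero_of_le ((le_sSup (mem_image_of_mem _ hq.1)).trans hσ_le)
  calc μ T ≤ μ (T ∩ ⋃ n, L n) + μ (T \ ⋃ n, L n) := measure_le_inter_add_sdiff _ _ _
    _ ≤ c := by rw [hrest, add_zero]; exact (measure_mono inter_subset_right).trans hE_le

variable [IsProbabilityMeasure μ] [NullSingletonClass μ] [IsStrictOrder α r] {S : Set α}

theorem measure_setOf_rel_add_measure_setOf_rel_eq_one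
    (hr : MeasurableSet {p : α × α | r p.1 p.2}) (hS : ∀ᵐ x ∂μ, x ∈ S)
    (htot : ∀ p ∈ S, ∀ q ∈ S, p ≠ q → r p q ∨ r q p) {t : α} (ht : t ∈ S) :
    μ {u | r u t} + μ {v | r t v} = 1 := by
  have hdisj : Disjoint {u | r u t} {v | r t v} :=
    disjoint_left.2 fun u hut htu => irrefl t (_root_.trans htu hut)
  have hmeas : MeasurableSet ({u | r u t} ∪ {v | r t v}) :=
    (measurable_prodMk_right hr).union (measurable_prodMk_left hr)
  rw [← measure_union hdisj (measurable_prodMk_left hr), ← prob_compl_eq_zero_iff hmeas]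
  refine measure_mono_null (fun u hu => ?_)
    (measure_union_null (mem_ae_iff.1 hS) (measure_singleton t))
  rcases eq_or_ne u t with rfl | hne
  · exact Or.inr rfl
  refine Or.inl fun huS => hu ?_
  rcases htot u huS t ht hne with h | h
  exacts [Or.inl h, Or.inr h]

theorem measure_setOf_relRank_le (hr : MeasurableSet {p : α × α | r p.1 p.2})
    (hS : ∀ᵐ x ∂μ, x ∈ S) (htot : ∀ p ∈ S, ∀ q ∈ S, p ≠ q → r p q ∨ r q p) {x : ℝ}
    (hx0 : 0 ≤ x) (hx1 : x ≤ 1) : μ {t | relRank μ r t ≤ x} = ENNReal.ofReal x := by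
  obtain ⟨S', hS'ae, hS'm, hS'S⟩ := hS.exists_measurable_mem
  have htot' (p : α) (hp : p ∈ S') (q : α) (hq : q ∈ S') (hpq : p ≠ q) : r p q ∨ r q p :=
    htot p (hS'S p hp) q (hS'S q hq) hpq
  set A := {t | relRank μ r t ≤ x}
  have hA : MeasurableSet A := measurable_relRank (μ := μ) hr measurableSet_Iic
  have hle : μ A ≤ ENNReal.ofReal x := by
    rw [← measure_inter_conull hS'ae]
    refine measure_le_of_forall_measure_setOf_rel_le hr (hA.inter hS'm)
      (fun p hp q hq => htot' p hp.2 q hq.2) fun t ht => ?_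
    exact (ENNReal.le_ofReal_iff_toReal_le (measure_ne_top _ _) hx0).2 ht.1
  have hle_compl : μ Aᶜ ≤ 1 - ENNReal.ofReal x := by
    rw [← measure_inter_conull hS'ae]
    refine measure_le_of_forall_measure_setOf_rel_le (r := Function.swap r) (measurable_swap hr)
      (hA.compl.inter hS'm) (fun p hp q hq hpq => (htot' p hp.2 q hq.2 hpq).symm) fun t ht => ?_
    have hsum := measure_setOf_rel_add_measure_setOf_rel_eq_one hr hS htot (hS'S t ht.2)
    have hlt : ENNReal.ofReal x < μ {u | r u t} :=
      (ENNReal.ofReal_lt_iff_lt_toReal hx0 (measure_ne_top _ _)).2 (not_le.1 ht.1)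
    rw [ENNReal.eq_sub_of_add_eq (measure_ne_top _ _) ((add_comm _ _).trans hsum)]
    exact tsub_le_tsub_left hlt.le 1
  refine le_antisymm hle ?_
  calc ENNReal.ofReal x = 1 - (1 - ENNReal.ofReal x) :=
        (ENNReal.sub_sub_cancel ENNReal.one_ne_top (ENNReal.ofReal_le_one.2 hx1)).symm
    _ ≤ 1 - μ Aᶜ := tsub_le_tsub_left hle_compl 1
    _ = μ A := by
      rw [prob_compl_eq_one_sub hA, ENNReal.sub_sub_cancel ENNReal.one_ne_top prob_le_one]

theorem map_relRank (hr : MeasurableSet {p : α × α | r p.1 p.2})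
    (hS : ∀ᵐ x ∂μ, x ∈ S) (htot : ∀ p ∈ S, ∀ q ∈ S, p ≠ q → r p q ∨ r q p) :
    μ.map (relRank μ r) = volume.restrict (Icc 0 1) := by
  have hm : Measurable (relRank μ r) := measurable_relRank hr
  have := Measure.isProbabilityMeasure_map (μ := μ) hm.aemeasurable
  refine eq_volume_restrict_Icc_of_measure_Iic _ fun x hx => ?_
  rw [Measure.map_apply hm measurableSet_Iic]
  exact measure_setOf_relRank_le hr hS htot hx.1 hx.2

end RelRank

theorem ContinuousOn.isOpen_setOf_exists_lt {X Y : Type*} [TopologicalSpace X]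
    [TopologicalSpace Y] [LinearOrder Y] [OrderClosedTopology Y] {f : X → Y} {U : Set X}
    (hf : ContinuousOn f U) (hU : IsOpen U) {W : X → Set X} (hW : ∀ y, IsOpen (W y)) :
    IsOpen {x | x ∈ U ∧ ∃ y, x ∈ W y ∧ f y < f x} := by
  have : {x | x ∈ U ∧ ∃ y, x ∈ W y ∧ f y < f x} = ⋃ y, W y ∩ (U ∩ f ⁻¹' Ioi (f y)) := by
    ext x
    simp only [mem_ofPred_eq, mem_iUnion, mem_inter_iff, mem_preimage, mem_Ioi]
    constructor
    · rintro ⟨hx, y, hxy, hlt⟩; exact ⟨y, hxy, hx, hlt⟩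
    · rintro ⟨y, hxy, hx, hlt⟩; exact ⟨hx, y, hxy, hlt⟩
  rw [this]
  exact isOpen_iUnion fun y => (hW y).inter (hf.isOpen_inter_preimage hU isOpen_Ioi)

section SignedExcursion

variable {g : ℝ → ℝ} {β γ u v t x y : ℝ}

theorem measurableSet_setOf_notOneSidedMin (hg : ContinuousOn g (Ioo 0 1)) :
    MeasurableSet {x | NotOneSidedMin g x} := by
  set δ : ℕ → ℝ := fun n => 1 / (n + 1)
  have hδ (n : ℕ) : 0 < δ n := by positivity
  have : {x | NotOneSidedMin g x} = ⋂ n,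
      {x | x ∈ Ioo 0 1 ∧ ∃ y, x ∈ Ioo y (y + δ n) ∧ g y < g x} ∩
      {x | x ∈ Ioo 0 1 ∧ ∃ y, x ∈ Ioo (y - δ n) y ∧ g y < g x} := by
    ext x
    simp only [mem_ofPred_eq, mem_iInter, mem_inter_iff, mem_Ioo]
    constructor
    · rintro ⟨hx, hmin⟩ n
      obtain ⟨⟨y, hy, hgy⟩, ⟨z, hz, hgz⟩⟩ := hmin (δ n) (hδ n)
      exact ⟨⟨hx, y, ⟨hy.2, by linarith [hy.1]⟩, hgy⟩, ⟨hx, z, ⟨by linarith [hz.2], hz.1⟩, hgz⟩⟩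
    · intro h
      refine ⟨(h 0).1.1, fun ε hε => ?_⟩
      obtain ⟨n, hn⟩ := exists_nat_one_div_lt hε
      obtain ⟨⟨-, y, hy, hgy⟩, ⟨-, z, hz, hgz⟩⟩ := h n
      exact ⟨⟨y, ⟨by linarith [hy.2], hy.1⟩, hgy⟩, ⟨z, ⟨hz.2, by linarith [hz.1]⟩, hgz⟩⟩
  rw [this]
  refine .iInter fun n => .inter ?_ ?_ <;>
    exact (hg.isOpen_setOf_exists_lt isOpen_Ioo fun y => isOpen_Ioo).measurableSet

theorem IsCRT.ae_notOneSidedMin (hg : IsCRT g) :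
    ∀ᵐ x ∂volume.restrict (Icc (0:ℝ) 1), NotOneSidedMin g x := by
  have hS := measurableSet_setOf_notOneSidedMin (hg.cont.mono Ioo_subset_Icc_self)
  have hsub : {x | NotOneSidedMin g x} ⊆ Icc 0 1 := fun x hx => Ioo_subset_Icc_self hx.1
  rw [ae_iff, ← compl_ofPred, Measure.restrict_apply hS.compl, inter_comm, ← sdiff_eq,
    measure_sdiff hsub hS.nullMeasurableSet (by simp [hg.leaves_full]), hg.leaves_full,
    Real.volume_Icc, sub_zero, ENNReal.ofReal_one, tsub_self]

theorem IsStrictLocalMin.isInnerLocalMin (h : IsStrictLocalMin g β) : IsInnerLocalMin g β := by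
  obtain ⟨hβ, ε, hε, hlt⟩ := h
  refine ⟨hβ, ε, hε, fun x hx => ?_⟩
  rcases eq_or_ne x β with rfl | hne
  exacts [le_rfl, (hlt x hx hne).le]

theorem IsCRT.eq_of_isStrictLocalMin (hg : IsCRT g) (hβ : IsStrictLocalMin g β)
    (hγ : IsStrictLocalMin g γ) (h : g β = g γ) : β = γ :=
  hg.distinct β γ hβ.isInnerLocalMin hγ.isInnerLocalMin h

theorem IsCRT.exists_isMrca (hg : IsCRT g) (hu : NotOneSidedMin g u)
    (hv : NotOneSidedMin g v) (huv : u < v) : ∃ β, IsMrca g β u v := by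
  -- `g` takes values below `g u` and `g v` inside `(u, v)`, so its minimisers on `[u, v]` are
  -- interior, hence inner local minima, of which there is at most one per value.
  obtain ⟨β, hβ, hmin⟩ := isCompact_Icc.exists_isMinOn (nonempty_Icc.2 huv.le)
    (hg.cont.mono (Icc_subset_Icc hu.1.1.le hv.1.2.le))
  obtain ⟨-, y, hy, hgy⟩ := hu.2 (v - u) (by linarith)
  obtain ⟨⟨z, hz, hgz⟩, -⟩ := hv.2 (v - u) (by linarith)
  have hgu : g β < g u := (hmin ⟨hy.1.le, by linarith [hy.2]⟩).trans_lt hgy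
  have hgv : g β < g v := (hmin ⟨by linarith [hz.1], hz.2.le⟩).trans_lt hgz
  have hint (w : ℝ) (hw : w ∈ Icc u v) (hgw : g w = g β) : w ∈ Ioo u v :=
    ⟨hw.1.lt_of_ne (by rintro rfl; linarith), hw.2.lt_of_ne (by rintro rfl; linarith)⟩
  have hball (w : ℝ) (hw : w ∈ Ioo u v) : 0 < min (w - u) (v - w) ∧
      Ioo (w - min (w - u) (v - w)) (w + min (w - u) (v - w)) ⊆ Icc u v := by
    refine ⟨lt_min (by linarith [hw.1]) (by linarith [hw.2]), fun x hx => ?_⟩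
    have := min_le_left (w - u) (v - w)
    have := min_le_right (w - u) (v - w)
    exact ⟨by linarith [hx.1], by linarith [hx.2]⟩
  have hloc (w : ℝ) (hw : w ∈ Icc u v) (hgw : g w = g β) : IsInnerLocalMin g w := by
    have hw' := hint w hw hgw
    obtain ⟨hpos, hsub⟩ := hball w hw'
    exact ⟨⟨hu.1.1.trans hw'.1, hw'.2.trans hv.1.2⟩, _, hpos, fun x hx => hgw ▸ hmin (hsub hx)⟩
  have huniq (w : ℝ) (hw : w ∈ Icc u v) (hgw : g w = g β) : w = β :=
    hg.distinct w β (hloc w hw hgw) (hloc β hβ rfl) hgw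
  obtain ⟨hpos, hsub⟩ := hball β (hint β hβ rfl)
  refine ⟨β, huv, hint β hβ rfl, ⟨(hloc β hβ rfl).1, _, hpos, fun x hx hxβ => ?_⟩,
    fun w hw => hmin hw, huniq⟩
  exact (hmin (hsub hx)).lt_of_ne fun h => hxβ (huniq x (hsub hx) h.symm)

/-- The excursion of `g` above the level `g β` straddling `β`; for a strict local minimum `β` of
a CRT excursion this is the open interval `(aPt g β, cPt g β)`. -/
def excursion (g : ℝ → ℝ) (β : ℝ) : Set ℝ := {x | ∀ t ∈ uIcc x β, t ≠ β → g β < g t}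

theorem ordConnected_excursion (g : ℝ → ℝ) (β : ℝ) : (excursion g β).OrdConnected := by
  refine ⟨fun x hx z hz y hy t ht htβ => ?_⟩
  rw [mem_uIcc] at ht
  rcases lt_or_gt_of_ne htβ with hlt | hgt
  · refine hx t (mem_uIcc.2 (Or.inl ⟨?_, hlt.le⟩)) htβ
    rcases ht with ht | ht
    exacts [hy.1.trans ht.1, absurd ht.1 hlt.not_ge]
  · refine hz t (mem_uIcc.2 (Or.inr ⟨hgt.le, ?_⟩)) htβ
    rcases ht with ht | ht
    exacts [absurd ht.2 hgt.not_ge, ht.2.trans hy.2]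

theorem le_of_mem_excursion (hx : x ∈ excursion g β) : g β ≤ g x := by
  rcases eq_or_ne x β with rfl | hne
  exacts [le_rfl, (hx x left_mem_uIcc hne).le]

theorem isMrca_iff : IsMrca g β u v ↔
    IsStrictLocalMin g β ∧ u ∈ excursion g β ∧ v ∈ excursion g β ∧ u < β ∧ β < v := by
  constructor
  · rintro ⟨-, ⟨huβ, hβv⟩, hβ, hmin, huniq⟩
    have hlt (t : ℝ) (ht : t ∈ Icc u v) (htβ : t ≠ β) : g β < g t :=
      (hmin t ht).lt_of_ne fun h => htβ (huniq t ht h.symm)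
    refine ⟨hβ, fun t ht htβ => hlt t ?_ htβ, fun t ht htβ => hlt t ?_ htβ, huβ, hβv⟩
    · rw [uIcc_of_le huβ.le] at ht
      exact ⟨ht.1, ht.2.trans hβv.le⟩
    · rw [uIcc_of_ge hβv.le] at ht
      exact ⟨huβ.le.trans ht.1, ht.2⟩
  · rintro ⟨hβ, hu, hv, huβ, hβv⟩
    have hlt (t : ℝ) (ht : t ∈ Icc u v) (htβ : t ≠ β) : g β < g t := by
      rcases le_total t β with h | h
      · exact hu t (mem_uIcc.2 (Or.inl ⟨ht.1, h⟩)) htβ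
      · exact hv t (mem_uIcc.2 (Or.inr ⟨h, ht.2⟩)) htβ
    refine ⟨huβ.trans hβv, ⟨huβ, hβv⟩, hβ, fun t ht => ?_, fun t ht h => ?_⟩
    · rcases eq_or_ne t β with rfl | htβ
      exacts [le_rfl, (hlt t ht htβ).le]
    · by_contra htβ
      exact (hlt t ht htβ).ne' h

theorem measurableSet_isMrca (g : ℝ → ℝ) (β : ℝ) :
    MeasurableSet {p : ℝ × ℝ | IsMrca g β p.1 p.2} := by
  by_cases hβ : IsStrictLocalMin g β
  · have : {p : ℝ × ℝ | IsMrca g β p.1 p.2} =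
        (excursion g β ∩ Iio β) ×ˢ (excursion g β ∩ Ioi β) := by
      ext p
      simp only [mem_ofPred_eq, isMrca_iff, hβ, true_and, mem_prod, mem_inter_iff, mem_Iio,
        mem_Ioi]
      tauto
    rw [this]
    exact ((ordConnected_excursion g β).inter ordConnected_Iio).measurableSet.prod
      ((ordConnected_excursion g β).inter ordConnected_Ioi).measurableSet
  · convert MeasurableSet.empty
    ext p
    simp [isMrca_iff, hβ]

variable {b : ℕ → ℝ} {s : ℕ → Bool}

theorem measurableSet_tri (g : ℝ → ℝ) (b : ℕ → ℝ) (s : ℕ → Bool) :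
    MeasurableSet {p : ℝ × ℝ | Tri g b s p.1 p.2} := by
  simp only [Tri, ofPred_exists, ofPred_or, ofPred_and]
  exact .iUnion fun i => ((measurableSet_isMrca g (b i)).inter (.const _)).union
    ((measurable_swap (measurableSet_isMrca g (b i))).inter (.const _))

theorem tri_iff : Tri g b s u v ↔ ∃ i, IsStrictLocalMin g (b i) ∧ u ∈ excursion g (b i) ∧
    v ∈ excursion g (b i) ∧ (s i = true ∧ u < b i ∧ b i < v ∨ s i = false ∧ v < b i ∧ b i < u) := by
  simp only [Tri, isMrca_iff]
  refine exists_congr fun i => ?_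
  tauto

theorem mem_excursion_of_lt (hlt : g β < g γ) (hxβ : x ∈ excursion g β)
    (hxγ : x ∈ excursion g γ) (hy : y ∈ excursion g γ) :
    y ∈ excursion g β ∧ (y < β ↔ x < β) ∧ (β < y ↔ β < x) := by
  have hsub := (ordConnected_excursion g γ).uIcc_subset hxγ hy
  have hβ : β ∉ uIcc x y := fun h => (le_of_mem_excursion (hsub h)).not_gt hlt
  rw [mem_uIcc] at hβ
  push Not at hβ
  refine ⟨fun t ht htβ => ?_, ⟨fun h => hβ.2 h.le, fun h => hβ.1 h.le⟩,
    ⟨fun h => lt_of_not_ge fun h' => (hβ.1 h').not_gt h,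
      fun h => lt_of_not_ge fun h' => (hβ.2 h').not_gt h⟩⟩
  rcases uIcc_subset_uIcc_union_uIcc ht with ht | ht
  · exact hlt.trans_le (le_of_mem_excursion (hsub (uIcc_comm y x ▸ ht)))
  · exact hxβ t (uIcc_comm β x ▸ ht) htβ

theorem tri_trans (hg : IsCRT g) (hb : Function.Injective b) (hut : Tri g b s u t)
    (htv : Tri g b s t v) : Tri g b s u v := by
  rw [tri_iff] at hut htv ⊢
  obtain ⟨i, hi, hui, hti, hsi⟩ := hut
  obtain ⟨j, hj, htj, hvj, hsj⟩ := htv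
  rcases lt_trichotomy (g (b i)) (g (b j)) with hlt | heq | hlt
  · obtain ⟨hvi, hside⟩ := mem_excursion_of_lt hlt hti htj hvj
    refine ⟨i, hi, hui, hvi, ?_⟩
    rcases hsi with ⟨hs, hu, ht⟩ | ⟨hs, ht, hu⟩
    exacts [Or.inl ⟨hs, hu, hside.2.2 ht⟩, Or.inr ⟨hs, hside.1.2 ht, hu⟩]
  · -- then `i = j`, and the sign `s i` would put `t` on both sides of `b i`
    obtain rfl := hb (hg.eq_of_isStrictLocalMin hi hj heq)
    rcases hsi with ⟨hs, -, ht⟩ | ⟨hs, ht, -⟩ <;> rcases hsj with ⟨hs', ht', -⟩ | ⟨hs', -, ht'⟩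
    all_goals first | linarith | simp_all
  · obtain ⟨huj, hside⟩ := mem_excursion_of_lt hlt htj hti hui
    refine ⟨j, hj, huj, hvj, ?_⟩
    rcases hsj with ⟨hs, ht, hv⟩ | ⟨hs, hv, ht⟩
    exacts [Or.inl ⟨hs, hside.1.2 ht, hv⟩, Or.inr ⟨hs, hv, hside.2.2 ht⟩]

theorem isStrictOrder_tri (hg : IsCRT g) (hb : Function.Injective b) :
    IsStrictOrder ℝ (Tri g b s) where
  irrefl u := by
    rintro ⟨i, ⟨h, -⟩ | ⟨h, -⟩⟩ <;> exact lt_irrefl u h.1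
  trans _ _ _ := tri_trans hg hb

theorem tri_or_tri (hg : IsCRT g) (hb : IsEnum g b) (hu : NotOneSidedMin g u)
    (hv : NotOneSidedMin g v) (hne : u ≠ v) : Tri g b s u v ∨ Tri g b s v u := by
  wlog huv : u < v generalizing u v
  · exact (this hv hu hne.symm (lt_of_le_of_ne (not_lt.1 huv) hne.symm)).symm
  obtain ⟨β, hβ⟩ := hg.exists_isMrca hu hv huv
  obtain ⟨i, rfl⟩ := (hb.2 β).1 hβ.2.2.1
  cases hs : s i
  exacts [Or.inr ⟨i, Or.inr ⟨hβ, hs⟩⟩, Or.inl ⟨i, Or.inl ⟨hβ, hs⟩⟩]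

theorem phi_eq_relRank (g : ℝ → ℝ) (b : ℕ → ℝ) (s : ℕ → Bool) :
    phi g b s = relRank (volume.restrict (Icc 0 1)) (Tri g b s) := by
  funext t
  rw [phi, relRank, Measure.restrict_apply' measurableSet_Icc]
  congr 2
  ext u
  exact and_comm

end SignedExcursion

/-- `φ_{g,s}` preserves Lebesgue measure on `[0,1]`, hence `μ_{g,s}` is a permuton. -/
theorem stmt3 (g : ℝ → ℝ) (hg : IsCRT g) (b : ℕ → ℝ) (hb : IsEnum g b) (s : ℕ → Bool) :
    Measure.map (phi g b s) (volume.restrict (Set.Icc 0 1)) = volume.restrict (Set.Icc 0 1) ∧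
    Measure.map Prod.fst (permuton g b s) = volume.restrict (Set.Icc 0 1) ∧
    Measure.map Prod.snd (permuton g b s) = volume.restrict (Set.Icc 0 1) := by
  have : IsProbabilityMeasure (volume.restrict (Icc (0:ℝ) 1)) := ⟨by simp⟩
  have := isStrictOrder_tri (s := s) hg hb.1
  have hmeas : Measurable (phi g b s) :=
    phi_eq_relRank g b s ▸ measurable_relRank (measurableSet_tri g b s)
  have hmap : Measure.map (phi g b s) (volume.restrict (Icc 0 1)) = volume.restrict (Icc 0 1) :=
    phi_eq_relRank g b s ▸ map_relRank (measurableSet_tri g b s) hg.ae_notOneSidedMin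
      fun u hu v hv => tri_or_tri hg hb hu hv
  exact ⟨hmap, (Measure.fst_map_prodMk hmeas).trans Measure.map_id',
    (Measure.snd_map_prodMk measurable_id).trans hmap⟩

end
end

section
/- For every permutation σ ∈ S_n, the Kolmogorov distance between the permuton μ_σ and the measure (Id, φ_σ)_* Leb is at most 2/n, where the Kolmogorov distance between measures ν, π on [0,1]² is sup_{x,y ∈ [0,1]} |ν − π|([0,x]×[0,y]). -/
open MeasureTheory Set

noncomputable section

/-- Index of the subinterval of `[0,1]` of length `1/n` containing `x`. -/
def finIdx (n : ℕ) (hn : 0 < n) (x : ℝ) : Fin n :=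
  ⟨min (Nat.floor ((n : ℝ) * x)) (n-1), by omega⟩

/-- The permuton `μ_σ` of a permutation `σ ∈ S_n`. -/
def permMeasure (n : ℕ) (hn : 0 < n) (σ : Equiv.Perm (Fin n)) : Measure (ℝ × ℝ) :=
  (volume.restrict (Set.Icc (0:ℝ) 1 ×ˢ Set.Icc (0:ℝ) 1)).withDensity
    (fun p => if σ (finIdx n hn p.1) = finIdx n hn p.2 then (n : ENNReal) else 0)

/-- The piecewise affine measure-preserving map `φ_σ`. -/
def phiPerm (n : ℕ) (hn : 0 < n) (σ : Equiv.Perm (Fin n)) (t : ℝ) : ℝ :=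
  ((σ (finIdx n hn t) : ℕ) : ℝ) / n + Int.fract ((n : ℝ) * t) / n

/-! On the column `I_k × ℝ`, `I_k = [k/n, (k+1)/n)`, the permuton `μ_σ` is uniform on the square
`I_k × I_{σ k}` and `(Id, φ_σ)_* Leb` is uniform on its diagonal. The two masses of
`[0,x] × [0,y]` in that column therefore agree when `I_k ⊆ [0,x]` or `x ≤ k/n`, and in general
differ by at most `|I_k ∩ (x - 1/n, x]|`; summing over `k` bounds the distance by `1/n`. -/

def overlap (a h c : ℝ) : ℝ := min c (a + h) - min c a

section Overlap

variable {a h c d x : ℝ}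

lemma overlap_nonneg (hh : 0 ≤ h) : 0 ≤ overlap a h c := by
  simp only [overlap, min_def]; split_ifs <;> linarith

lemma overlap_le (hh : 0 ≤ h) : overlap a h c ≤ h := by
  simp only [overlap, min_def]; split_ifs <;> linarith

lemma overlap_mono (hh : 0 ≤ h) : Monotone (overlap a h) := by
  intro c c' hc; simp only [overlap, min_def]; split_ifs <;> linarith

lemma overlap_eq_zero_of_le (hh : 0 ≤ h) (hc : c ≤ a) : overlap a h c = 0 := by
  simp only [overlap, min_def]; split_ifs <;> linarith

lemma overlap_eq_of_le (hh : 0 ≤ h) (hc : a + h ≤ c) : overlap a h c = h := by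
  simp only [overlap, min_def]; split_ifs <;> linarith

lemma overlap_min_of_le (hh : 0 ≤ h) (hx : a + h ≤ x) : overlap a h (min x c) = overlap a h c := by
  simp only [overlap, min_def]; split_ifs <;> linarith

lemma overlap_add_sub (a b h c : ℝ) : overlap a h (c + a - b) = overlap b h c := by
  simp only [overlap, min_def]; split_ifs <;> linarith

lemma overlap_sub_overlap_le (hd : 0 ≤ d) : overlap a h c - overlap a h (c - d) ≤ d := by
  simp only [overlap, min_def]; split_ifs <;> linarith

end Overlap

lemma volume_Ico_inter_Iic_eq_overlap {a h : ℝ} (hh : 0 ≤ h) (c : ℝ) :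
    volume (Ico a (a + h) ∩ Iic c) = ENNReal.ofReal (overlap a h c) := by
  rw [overlap, ← measure_congr (Filter.EventuallyEq.rfl.inter Iio_ae_eq_Iic), Ico_inter_Iio,
    Real.volume_Ico]
  rcases le_total a c with hc | hc
  · rw [min_eq_right hc, min_comm]
  · rw [min_eq_left hc, min_eq_left (hc.trans (le_add_of_nonneg_right hh)), sub_self,
      ENNReal.ofReal_eq_zero.2 (by linarith [min_le_right (a + h) c]), ENNReal.ofReal_zero]

lemma sum_overlap {n : ℕ} (hn : 0 < n) (c : ℝ) :
    ∑ k : Fin n, overlap ((k : ℝ) / n) (1 / n) c = overlap 0 1 c := by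
  rw [Fin.sum_univ_eq_sum_range (fun k => overlap ((k : ℝ) / n) (1 / n) c)]
  have := Finset.sum_range_sub (fun k : ℕ => min c ((k : ℝ) / n)) n
  simp only [overlap, zero_add, Nat.cast_add, Nat.cast_one, add_div] at this ⊢
  rw [this, div_self (by positivity), Nat.cast_zero, zero_div]

/-- The column `[a, a + 1/N)` holds mass `N |[a, a + 1/N) ∩ [0,x]| |[b, b + 1/N) ∩ [0,y]|` under
the uniform measure on the square over it, and mass `|[a, a + 1/N) ∩ [0,x] ∩ [0, y + a - b]|`
under the uniform measure on the square's diagonal. -/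
lemma abs_sub_overlap_le {N a b x y : ℝ} (hN : 0 < N) :
    |N * (overlap a (1 / N) x * overlap b (1 / N) y) - overlap a (1 / N) (min x (y + a - b))|
      ≤ overlap a (1 / N) x - overlap a (1 / N) (x - 1 / N) := by
  have hh : 0 ≤ 1 / N := by positivity
  rcases lt_or_ge x (a + 1 / N) with hx | hx
  · have hsquare : N * (overlap a (1 / N) x * overlap b (1 / N) y) ≤ overlap a (1 / N) x :=
      calc N * (overlap a (1 / N) x * overlap b (1 / N) y)
          ≤ N * (overlap a (1 / N) x * (1 / N)) := by
            gcongr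
            · exact overlap_nonneg hh
            · exact overlap_le hh
        _ = overlap a (1 / N) x := by field_simp
    have hdiag : overlap a (1 / N) (min x (y + a - b)) ≤ overlap a (1 / N) x :=
      overlap_mono hh (min_le_left _ _)
    rw [overlap_eq_zero_of_le hh (c := x - 1 / N) (by linarith), sub_zero, abs_sub_le_iff]
    constructor
    · linarith [overlap_nonneg hh (a := a) (c := min x (y + a - b))]
    · linarith [mul_nonneg hN.le (mul_nonneg (overlap_nonneg hh (a := a) (c := x))
        (overlap_nonneg hh (a := b) (c := y)))]
  · rw [overlap_min_of_le hh hx, overlap_add_sub, overlap_eq_of_le hh hx, ← mul_assoc,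
      mul_one_div_cancel hN.ne', one_mul, sub_self, abs_zero]
    exact sub_nonneg.2 (overlap_le hh)

lemma measure_eq_sum_preimage_singleton_inter {α β : Type*} [MeasurableSpace α] [Fintype β]
    {μ : Measure α} {f : α → β} (hf : ∀ b, MeasurableSet (f ⁻¹' {b})) (s : Set α) :
    μ s = ∑ b, μ (f ⁻¹' {b} ∩ s) := by
  rw [← Measure.restrict_apply_univ, ← preimage_univ (f := f), ← Finset.coe_univ,
    ← sum_measure_preimage_singleton _ fun b _ => hf b]
  simp only [Measure.restrict_apply (hf _)]

section Blocks

variable {n : ℕ}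

lemma mem_Ico_div_iff_mul_mem (hn : 0 < n) {k : ℕ} {t : ℝ} :
    t ∈ Ico ((k : ℝ) / n) (k / n + 1 / n) ↔ (n : ℝ) * t ∈ Ico (k : ℝ) (k + 1) := by
  have hn' : (0 : ℝ) < n := by positivity
  rw [← add_div, mem_Ico, mem_Ico, div_le_iff₀ hn', lt_div_iff₀ hn', mul_comm t]

lemma Ico_div_subset_Ico (hn : 0 < n) (k : Fin n) :
    Ico ((k : ℝ) / n) (k / n + 1 / n) ⊆ Ico 0 1 := by
  intro t ht
  have hk : (k : ℝ) + 1 ≤ n := by exact_mod_cast k.isLt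
  have hn' : (0 : ℝ) < n := by positivity
  have := (mem_Ico_div_iff_mul_mem hn).1 ht
  rw [mem_Ico] at this ⊢
  constructor <;> nlinarith [k.val.cast_nonneg (α := ℝ)]

lemma finIdx_val_of_mem_Ico (hn : 0 < n) {t : ℝ} (ht : t ∈ Ico (0 : ℝ) 1) :
    (finIdx n hn t : ℕ) = ⌊(n : ℝ) * t⌋₊ := by
  have hn' : (0 : ℝ) < n := by positivity
  have hlt : ⌊(n : ℝ) * t⌋₊ < n := (Nat.floor_lt (by nlinarith [ht.1])).2 (by nlinarith [ht.2])
  simp only [finIdx]; omega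

lemma mem_Ico_div_iff_finIdx (hn : 0 < n) (k : Fin n) {t : ℝ} :
    t ∈ Ico ((k : ℝ) / n) (k / n + 1 / n) ↔ t ∈ Ico 0 1 ∧ finIdx n hn t = k := by
  have hn' : (0 : ℝ) < n := by positivity
  refine ⟨fun ht => ⟨Ico_div_subset_Ico hn k ht, ?_⟩, fun ⟨ht, hk⟩ => ?_⟩
  · have ht01 := Ico_div_subset_Ico hn k ht
    rw [Fin.ext_iff, finIdx_val_of_mem_Ico hn ht01]
    exact (Nat.floor_eq_iff (by nlinarith [ht01.1])).2 ((mem_Ico_div_iff_mul_mem hn).1 ht)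
  · rw [mem_Ico_div_iff_mul_mem hn, ← hk, finIdx_val_of_mem_Ico hn ht]
    exact ⟨Nat.floor_le (by nlinarith [ht.1]), Nat.lt_floor_add_one _⟩

lemma measurable_finIdx (hn : 0 < n) : Measurable (finIdx n hn) := by
  refine measurable_to_countable' fun k => ?_
  have : finIdx n hn ⁻¹' {k} = (fun t : ℝ => min ⌊(n : ℝ) * t⌋₊ (n - 1)) ⁻¹' {(k : ℕ)} := by
    ext t; simp [finIdx, Fin.ext_iff]
  rw [this]
  exact ((Nat.measurable_floor.comp (measurable_const_mul _)).min measurable_const)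
    (measurableSet_singleton _)

lemma measurable_phiPerm (hn : 0 < n) (σ : Equiv.Perm (Fin n)) : Measurable (phiPerm n hn σ) :=
  ((measurable_from_top (f := fun k : Fin n => ((σ k : ℕ) : ℝ) / n)).comp
    (measurable_finIdx hn)).add ((measurable_fract.comp (measurable_const_mul _)).div_const _)

lemma phiPerm_of_mem_Ico_div (hn : 0 < n) (σ : Equiv.Perm (Fin n)) {k : Fin n} {t : ℝ}
    (ht : t ∈ Ico ((k : ℝ) / n) (k / n + 1 / n)) :
    phiPerm n hn σ t = ((σ k : ℕ) : ℝ) / n + (t - k / n) := by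
  have hn' : (0 : ℝ) < n := by positivity
  have hfloor : ⌊(n : ℝ) * t⌋ = ((k : ℕ) : ℤ) := by
    rw [Int.floor_eq_iff]; exact_mod_cast (mem_Ico_div_iff_mul_mem hn).1 ht
  rw [phiPerm, ((mem_Ico_div_iff_finIdx hn k).1 ht).2, Int.fract, hfloor]
  push_cast
  field_simp

lemma toReal_permMeasure_Icc_prod (hn : 0 < n) (σ : Equiv.Perm (Fin n)) (x y : ℝ) :
    (permMeasure n hn σ (Icc 0 x ×ˢ Icc 0 y)).toReal =
      ∑ k : Fin n, n * (overlap ((k : ℝ) / n) (1 / n) x *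
        overlap (((σ k : ℕ) : ℝ) / n) (1 / n) y) := by
  have hh : (0 : ℝ) ≤ 1 / n := by positivity
  set A := {p : ℝ × ℝ | σ (finIdx n hn p.1) = finIdx n hn p.2}
  have hA : MeasurableSet A := measurableSet_eq_fun
    (measurable_from_top.comp ((measurable_finIdx hn).comp measurable_fst))
    ((measurable_finIdx hn).comp measurable_snd)
  have hS : MeasurableSet (Icc (0 : ℝ) x ×ˢ Icc (0 : ℝ) y) :=
    measurableSet_Icc.prod measurableSet_Icc
  have hsquare : (Icc (0 : ℝ) 1 ×ˢ Icc (0 : ℝ) 1 : Set (ℝ × ℝ)) =ᵐ[volume] Ico 0 1 ×ˢ Ico 0 1 := by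
    rw [Measure.volume_eq_prod]
    exact Measure.set_prod_ae_eq Ico_ae_eq_Icc.symm Ico_ae_eq_Icc.symm
  have hcolumn : ∀ k : Fin n, (finIdx n hn ∘ Prod.fst) ⁻¹' {k} ∩
      (A ∩ (Icc 0 x ×ˢ Icc 0 y ∩ Ico 0 1 ×ˢ Ico 0 1)) =
      (Ico ((k : ℝ) / n) (k / n + 1 / n) ∩ Iic x) ×ˢ
        (Ico (((σ k : ℕ) : ℝ) / n) ((σ k : ℕ) / n + 1 / n) ∩ Iic y) := by
    intro k; ext ⟨t, u⟩
    simp only [mem_inter_iff, mem_prod, mem_preimage, mem_singleton_iff, mem_Iic,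
      mem_Ico_div_iff_finIdx hn, A, mem_ofPred_eq, mem_Icc, mem_Ico]
    grind
  rw [permMeasure, Measure.restrict_congr_set hsquare, withDensity_apply _ hS,
    Measure.restrict_restrict hS,
    show (fun p : ℝ × ℝ => if σ (finIdx n hn p.1) = finIdx n hn p.2 then (n : ENNReal) else 0) =
      A.indicator (fun _ => (n : ENNReal)) by ext p; simp [A, indicator_apply],
    lintegral_indicator_const hA, Measure.restrict_apply hA,
    measure_eq_sum_preimage_singleton_inter
      (fun k => (measurable_finIdx hn).comp measurable_fst (measurableSet_singleton k))]
  simp_rw [hcolumn, Measure.volume_eq_prod, Measure.prod_prod, volume_Ico_inter_Iic_eq_overlap hh]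
  rw [ENNReal.toReal_mul, ENNReal.toReal_sum fun k _ => by finiteness, Finset.mul_sum]
  simp only [ENNReal.toReal_mul, ENNReal.toReal_ofReal (overlap_nonneg hh),
    ENNReal.toReal_natCast]

lemma toReal_map_graph_phiPerm_Icc_prod (hn : 0 < n) (σ : Equiv.Perm (Fin n)) (x y : ℝ) :
    ((Measure.map (fun t => (t, phiPerm n hn σ t)) (volume.restrict (Icc 0 1)))
        (Icc 0 x ×ˢ Icc 0 y)).toReal =
      ∑ k : Fin n, overlap ((k : ℝ) / n) (1 / n) (min x (y + k / n - ((σ k : ℕ) : ℝ) / n)) := by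
  have hh : (0 : ℝ) ≤ 1 / n := by positivity
  have hgraph : Measurable fun t => (t, phiPerm n hn σ t) :=
    measurable_id.prodMk (measurable_phiPerm hn σ)
  have hS : MeasurableSet (Icc (0 : ℝ) x ×ˢ Icc (0 : ℝ) y) :=
    measurableSet_Icc.prod measurableSet_Icc
  have hcolumn : ∀ k : Fin n, finIdx n hn ⁻¹' {k} ∩
      ((fun t => (t, phiPerm n hn σ t)) ⁻¹' (Icc 0 x ×ˢ Icc 0 y) ∩ Ico 0 1) =
      Ico ((k : ℝ) / n) (k / n + 1 / n) ∩ Iic (min x (y + k / n - ((σ k : ℕ) : ℝ) / n)) := by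
    intro k; ext t
    simp only [mem_inter_iff, mem_preimage, mem_singleton_iff, mem_prod, mem_Icc, mem_Iic,
      le_min_iff]
    constructor
    · rintro ⟨hk, ⟨htx, hφ⟩, ht01⟩
      have hblock := (mem_Ico_div_iff_finIdx hn k).2 ⟨ht01, hk⟩
      rw [phiPerm_of_mem_Ico_div hn σ hblock] at hφ
      exact ⟨hblock, htx.2, by linarith [hφ.2]⟩
    · rintro ⟨hblock, htx, hty⟩
      obtain ⟨ht01, hk⟩ := (mem_Ico_div_iff_finIdx hn k).1 hblock
      have hσk : (0 : ℝ) ≤ ((σ k : ℕ) : ℝ) / n := by positivity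
      rw [phiPerm_of_mem_Ico_div hn σ hblock]
      exact ⟨hk, ⟨⟨ht01.1, htx⟩, by linarith [hblock.1], by linarith⟩, ht01⟩
  rw [Measure.restrict_congr_set Ico_ae_eq_Icc.symm, Measure.map_apply hgraph hS,
    Measure.restrict_apply (hgraph hS),
    measure_eq_sum_preimage_singleton_inter
      (fun k => measurable_finIdx hn (measurableSet_singleton k))]
  simp_rw [hcolumn, volume_Ico_inter_Iic_eq_overlap hh]
  rw [ENNReal.toReal_sum fun k _ => ENNReal.ofReal_ne_top]
  simp only [ENNReal.toReal_ofReal (overlap_nonneg hh)]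

end Blocks

/-- The Kolmogorov distance between `μ_σ` and `(Id, φ_σ)_* Leb` is at most `2/n`. -/
theorem stmt9 (n : ℕ) (hn : 0 < n) (σ : Equiv.Perm (Fin n)) :
    ∀ x ∈ Set.Icc (0:ℝ) 1, ∀ y ∈ Set.Icc (0:ℝ) 1,
      |(permMeasure n hn σ (Set.Icc 0 x ×ˢ Set.Icc 0 y)).toReal -
        ((Measure.map (fun t => (t, phiPerm n hn σ t)) (volume.restrict (Set.Icc 0 1)))
          (Set.Icc 0 x ×ˢ Set.Icc 0 y)).toReal| ≤ 2 / n := by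
  intro x _ y _
  have hn' : (0 : ℝ) < n := by positivity
  rw [toReal_permMeasure_Icc_prod, toReal_map_graph_phiPerm_Icc_prod, ← Finset.sum_sub_distrib]
  calc _ ≤ ∑ k : Fin n,
          (overlap ((k : ℝ) / n) (1 / n) x - overlap ((k : ℝ) / n) (1 / n) (x - 1 / n)) :=
        (Finset.abs_sum_le_sum_abs _ _).trans
          (Finset.sum_le_sum fun k _ => abs_sub_overlap_le hn')
    _ = overlap 0 1 x - overlap 0 1 (x - 1 / n) := by
        rw [Finset.sum_sub_distrib, sum_overlap hn, sum_overlap hn]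
    _ ≤ 1 / n := overlap_sub_overlap_le (by positivity)
    _ ≤ 2 / n := by gcongr; norm_num

end
end
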